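/- Equivalence up to Tau is an equivalence relation: for any event signature E and result type R, the weak bisimulation relation ≡ on itree E R is reflexive, symmetric, and transitive. -/

import Mathlib

/-! ## Interaction trees -/

/-- Node shapes of an interaction tree over event signature `E` with result type `R`. -/
inductive ITreeShape (E : Type → Type) (R : Type) : Type 1
  | ret (r : R) : ITreeShape E R
  | tau : ITreeShape E R
  | vis (X : Type) (e : E X) : ITreeShape E R

/-- The polynomial functor whose final coalgebra is the type of interaction trees. -/
def ITreeF (E : Type → Type) (R : Type) : PFunctor.{1, 1} :=
  ⟨ITreeShape E R, fun s =>
    match s with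
    | .ret _ => PEmpty
    | .tau => PUnit
    | .vis X _ => ULift X⟩

/-- Interaction trees: the coinductive type with constructors `Ret`, `Tau` and `Vis`,
realized as the M-type (final coalgebra) of `ITreeF E R`. -/
def ITree (E : Type → Type) (R : Type) : Type 1 :=
  (ITreeF E R).M

namespace ITree

variable {E : Type → Type} {A B R S : Type}

/-- `Ret r`: the computation that halts returning `r`. -/
def ret (r : R) : ITree E R :=
  PFunctor.M.mk ⟨ITreeShape.ret r, fun x => PEmpty.elim x⟩

/-- `Tau t`: a silent internal step followed by `t`. -/
def tau (t : ITree E R) : ITree E R :=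
  PFunctor.M.mk ⟨ITreeShape.tau, fun _ => t⟩

/-- `Vis e k`: a visible event `e` awaiting an answer `x : X`, continuing as `k x`. -/
def vis {X : Type} (e : E X) (k : X → ITree E R) : ITree E R :=
  PFunctor.M.mk ⟨ITreeShape.vis X e, fun x => k x.down⟩

/-- Monadic bind: corecursively grafts `k r` at each leaf `Ret r`. -/
def bind (t : ITree E A) (k : A → ITree E R) : ITree E R :=
  PFunctor.M.corec
    (fun s =>
      match s with
      | Sum.inl t' =>
        match PFunctor.M.dest t' with
        | ⟨ITreeShape.ret a, _⟩ =>
          match PFunctor.M.dest (k a) with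
          | ⟨sh, ch⟩ => ⟨sh, fun b => Sum.inr (ch b)⟩
        | ⟨ITreeShape.tau, ch⟩ => ⟨ITreeShape.tau, fun b => Sum.inl (ch b)⟩
        | ⟨ITreeShape.vis X e, ch⟩ => ⟨ITreeShape.vis X e, fun b => Sum.inl (ch b)⟩
      | Sum.inr u =>
        match PFunctor.M.dest u with
        | ⟨sh, ch⟩ => ⟨sh, fun b => Sum.inr (ch b)⟩)
    (Sum.inl t : ITree E A ⊕ ITree E R)

instance : Monad (ITree E) where
  pure := ret
  bind := bind

/-- Perform a single event and return its answer. -/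
def trigger {X : Type} (e : E X) : ITree E X :=
  vis e ret

/-- The silently diverging tree: `spin = Tau spin`. -/
def spin : ITree E R :=
  PFunctor.M.corec (fun _ : PUnit.{2} => ⟨ITreeShape.tau, fun _ => PUnit.unit⟩) PUnit.unit

/-- Iterate a body `step` forever (a `CoFixpoint` loop threading a state `s : S`). -/
def loop (step : S → ITree E S) (s₀ : S) : ITree E Unit :=
  PFunctor.M.corec
    (fun t : ITree E S =>
      match PFunctor.M.dest t with
      | ⟨ITreeShape.ret s, _⟩ => ⟨ITreeShape.tau, fun _ => step s⟩
      | ⟨ITreeShape.tau, ch⟩ => ⟨ITreeShape.tau, fun b => ch b⟩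
      | ⟨ITreeShape.vis X e, ch⟩ => ⟨ITreeShape.vis X e, fun b => ch b⟩)
    (step s₀)

/-! ## Equivalence up to Tau (weak bisimulation) -/

/-- `Untaus t u`: `u` is obtained from `t` by removing finitely many leading `Tau`
nodes, and `u` does not itself start with a `Tau`. -/
inductive Untaus : ITree E R → ITree E R → Prop
  | base {t : ITree E R} (h : ∀ t', t ≠ tau t') : Untaus t t
  | step {t u : ITree E R} (h : Untaus t u) : Untaus (tau t) u

/-- `t` converges to a non-`Tau` node after finitely many leading `Tau`s. -/
def FiniteTaus (t : ITree E R) : Prop := ∃ t', Untaus t t'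

/-- Two trees with no leading `Tau` match up to `Rel`: both are the same `Ret`,
or both are `Vis` of the same event with continuations pointwise related by `Rel`. -/
def EqHead (Rel : ITree E R → ITree E R → Prop) (t u : ITree E R) : Prop :=
  (∃ r : R, t = ret r ∧ u = ret r) ∨
  (∃ (X : Type) (e : E X) (k k' : X → ITree E R),
      t = vis e k ∧ u = vis e k' ∧ ∀ x : X, Rel (k x) (k' x))

/-- `Rel` is a weak bisimulation. -/
def IsEuttRel (Rel : ITree E R → ITree E R → Prop) : Prop :=
  ∀ t u, Rel t u →
    (FiniteTaus t ↔ FiniteTaus u) ∧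
    (∀ t' u', Untaus t t' → Untaus u u' → EqHead Rel t' u')

/-- Equivalence up to `Tau`: the greatest weak bisimulation. -/
def Eutt (t u : ITree E R) : Prop :=
  ∃ Rel, IsEuttRel Rel ∧ Rel t u

/-! ## Traces -/

/-- An event together with the environment's answer. -/
structure EventE (E : Type → Type) : Type 1 where
  X : Type
  e : E X
  ans : X

/-- `IsTrace t tr r?` holds when `tr` lists, in order, the `Vis` events (with answers)
along a finite `Tau`-skipping path of `t`, with `r? = some r` if the path ends at
`Ret r` and `none` otherwise. -/
inductive IsTrace : ITree E R → List (EventE E) → Option R → Prop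
  | nil (t : ITree E R) : IsTrace t [] none
  | retEnd (r : R) : IsTrace (ITree.ret r) [] (some r)
  | tauStep {t : ITree E R} {tr r?} : IsTrace t tr r? → IsTrace (ITree.tau t) tr r?
  | visStep {X : Type} (e : E X) (x : X) {k : X → ITree E R} {tr r?} :
      IsTrace (k x) tr r? → IsTrace (ITree.vis e k) (⟨X, e, x⟩ :: tr) r?

/-- Trace refinement: every trace of `t` (with its optional result) is a trace of `u`. -/
def Refines (t u : ITree E R) : Prop :=
  ∀ tr r?, IsTrace t tr r? → IsTrace u tr r?

end ITree

/-!
Weak bisimulations contain the identity and are closed under converse and composition.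
Composition is the only point needing care: since stripping leading `Tau`s is deterministic,
the middle tree has a unique `Tau`-free head, which exists because the first bisimulation
transports `FiniteTaus` from the left tree to it; the two head matchings then meet there.
-/

namespace ITree

variable {E : Type → Type} {R : Type}

theorem ret_injective : Function.Injective (ret : R → ITree E R) := fun _ _ h => by
  injection congrArg Sigma.fst (PFunctor.M.mk_inj h)

theorem tau_injective : Function.Injective (tau : ITree E R → ITree E R) := fun _ _ h => by
  injection PFunctor.M.mk_inj h with _ hchildren
  exact congrFun hchildren PUnit.unit

theorem ret_ne_vis {X : Type} (r : R) (e : E X) (k : X → ITree E R) : ret r ≠ vis e k :=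
  fun h => by injection congrArg Sigma.fst (PFunctor.M.mk_inj h)

theorem vis_inj {X X' : Type} {e : E X} {e' : E X'} {k : X → ITree E R} {k' : X' → ITree E R}
    (h : vis e k = vis e' k') : X = X' ∧ HEq e e' ∧ HEq k k' := by
  have hmk := PFunctor.M.mk_inj h
  obtain ⟨⟩ := congrArg Sigma.fst hmk
  injection hmk with _ hchildren
  have hk : k = k' := funext fun x => congrFun hchildren ⟨x⟩
  exact ⟨rfl, HEq.rfl, hk ▸ HEq.rfl⟩

theorem eq_ret_or_eq_tau_or_eq_vis (t : ITree E R) :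
    (∃ r, t = ret r) ∨ (∃ t', t = tau t') ∨
      ∃ (X : Type) (e : E X) (k : X → ITree E R), t = vis e k := by
  rw [← PFunctor.M.mk_dest t]
  obtain ⟨shape, children⟩ := PFunctor.M.dest t
  cases shape with
  | ret r =>
    have hchildren : children = fun x => PEmpty.elim x := funext fun x => PEmpty.elim x
    exact .inl ⟨r, by rw [hchildren]; rfl⟩
  | tau => exact .inr (.inl ⟨children PUnit.unit, rfl⟩)
  | vis X e => exact .inr (.inr ⟨X, e, fun x => children ⟨x⟩, rfl⟩)

namespace Untaus

theorem of_tau {t u : ITree E R} (h : Untaus (tau t) u) : Untaus t u := by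
  generalize hs : tau t = s at h
  cases h with
  | base hne => exact absurd hs.symm (hne t)
  | step h => rwa [tau_injective hs]

theorem unique {t u u' : ITree E R} (h : Untaus t u) (h' : Untaus t u') : u = u' := by
  induction h generalizing u' with
  | base hne =>
    cases h' with
    | base _ => rfl
    | step _ => exact absurd rfl (hne _)
  | step _ ih => exact ih h'.of_tau

theorem ne_tau {t u : ITree E R} (h : Untaus t u) (s : ITree E R) : u ≠ tau s := by
  induction h with
  | base hne => exact hne s
  | step _ ih => exact ih

end Untaus

theorem eqHead_eq_self {t : ITree E R} (h : ∀ s, t ≠ tau s) : EqHead Eq t t := by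
  rcases eq_ret_or_eq_tau_or_eq_vis t with ⟨r, rfl⟩ | ⟨s, rfl⟩ | ⟨X, e, k, rfl⟩
  · exact .inl ⟨r, rfl, rfl⟩
  · exact absurd rfl (h s)
  · exact .inr ⟨X, e, k, k, rfl, rfl, fun _ => rfl⟩

namespace EqHead

variable {Rel R₁ R₂ : ITree E R → ITree E R → Prop} {t u v : ITree E R}

theorem flip (h : EqHead Rel t u) : EqHead (flip Rel) u t := by
  rcases h with ⟨r, rfl, rfl⟩ | ⟨X, e, k, k', rfl, rfl, hk⟩
  · exact .inl ⟨r, rfl, rfl⟩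
  · exact .inr ⟨X, e, k', k, rfl, rfl, hk⟩

theorem comp (h₁ : EqHead R₁ t u) (h₂ : EqHead R₂ u v) : EqHead (Relation.Comp R₁ R₂) t v := by
  rcases h₁ with ⟨r, rfl, rfl⟩ | ⟨X, e, k, k', rfl, rfl, hk⟩ <;>
    rcases h₂ with ⟨r₂, hr, rfl⟩ | ⟨X₂, e₂, k₂, k₂', hvis, rfl, hk₂⟩
  · exact .inl ⟨r, rfl, congrArg ret (ret_injective hr).symm⟩
  · exact absurd hvis (ret_ne_vis _ _ _)
  · exact absurd hr.symm (ret_ne_vis _ _ _)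
  · obtain ⟨rfl, he, hk'⟩ := vis_inj hvis
    cases he
    cases hk'
    exact .inr ⟨X, e, k, k₂', rfl, rfl, fun x => ⟨k' x, hk x, hk₂ x⟩⟩

end EqHead

theorem isEuttRel_eq : IsEuttRel (Eq : ITree E R → ITree E R → Prop) := by
  rintro t _ rfl
  refine ⟨Iff.rfl, fun t' u' ht hu => ?_⟩
  obtain rfl := ht.unique hu
  exact eqHead_eq_self ht.ne_tau

namespace IsEuttRel

variable {Rel R₁ R₂ : ITree E R → ITree E R → Prop}

theorem flip (h : IsEuttRel Rel) : IsEuttRel (flip Rel) := fun t u hr =>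
  ⟨(h u t hr).1.symm, fun _ _ ht hu => ((h u t hr).2 _ _ hu ht).flip⟩

theorem comp (h₁ : IsEuttRel R₁) (h₂ : IsEuttRel R₂) : IsEuttRel (Relation.Comp R₁ R₂) := by
  rintro t v ⟨u, htu, huv⟩
  obtain ⟨hfin₁, hhead₁⟩ := h₁ t u htu
  obtain ⟨hfin₂, hhead₂⟩ := h₂ u v huv
  refine ⟨hfin₁.trans hfin₂, fun t' v' ht hv => ?_⟩
  obtain ⟨u', hu⟩ : FiniteTaus u := hfin₁.mp ⟨t', ht⟩
  exact (hhead₁ t' u' ht hu).comp (hhead₂ u' v' hu hv)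

end IsEuttRel

end ITree

/-- Equivalence up to `Tau` is an equivalence relation:
it is reflexive, symmetric, and transitive. -/
theorem eutt_equivalence (E : Type → Type) (R : Type) :
    Equivalence (ITree.Eutt (E := E) (R := R)) := by
  refine ⟨fun _ => ⟨Eq, ITree.isEuttRel_eq, rfl⟩, ?_, ?_⟩
  · rintro t u ⟨Rel, hRel, htu⟩
    exact ⟨flip Rel, hRel.flip, htu⟩
  · rintro t u v ⟨R₁, h₁, htu⟩ ⟨R₂, h₂, huv⟩
    exact ⟨Relation.Comp R₁ R₂, h₁.comp h₂, u, htu, huv⟩
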